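/- In the majority-coordination meta-game, let Γ¹_* be the meta-action of LLM 1 that places probability 1/2 on the role-homogeneous pure meta-action instructing action 0 in all three roles and probability 1/2 on the one instructing action 1 in all three roles. If p > 1/2, then for every meta-action Γ² of LLM 2, Ū^1(Γ¹_*, Γ²) ≥ 100/3 + (50/3)(1−p)(2p−1); in particular LLM 1 guarantees itself an average utility strictly greater than 100/3. -/

import Mathlib

open Finset

namespace MetaGame

/-- A mixed action over a finite action set: a probability vector. -/
def Mixed (α : Type) [Fintype α] : Type :=
  {f : α → ℝ // (∀ a, 0 ≤ f a) ∧ ∑ a, f a = 1}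

/-- The point-mass (Dirac) mixed action on `a`. -/
noncomputable def Mixed.dirac {α : Type} [Fintype α] [DecidableEq α] (a : α) : Mixed α :=
  ⟨fun b => if b = a then 1 else 0,
    fun b => by by_cases h : b = a <;> simp [h],
    by simp⟩

/-- A finitely supported probability distribution on `α`. -/
structure FinDist (α : Type) where
  support : Finset α
  w : α → ℝ
  nonneg : ∀ x, 0 ≤ w x
  sum_one : ∑ x ∈ support, w x = 1
  zero_of_not_mem : ∀ x, x ∉ support → w x = 0

/-- The point mass distribution on `x`. -/
noncomputable def FinDist.pure {α : Type} (x : α) : FinDist α := by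
  classical
  exact
    { support := {x}
      w := fun y => if y = x then 1 else 0
      nonneg := fun y => by by_cases h : y = x <;> simp [h]
      sum_one := by simp
      zero_of_not_mem := fun y hy => by
        simp only [Finset.mem_singleton] at hy
        simp [hy] }

variable {m k : ℕ} {A : Fin m → Type} [∀ i, Fintype (A i)] [∀ i, DecidableEq (A i)]

/-- Multilinear extension of a payoff function to profiles of mixed actions. -/
noncomputable def expPay (u : (∀ r : Fin m, A r) → ℝ) (σ : ∀ r, Mixed (A r)) : ℝ :=
  ∑ a : ∀ r : Fin m, A r, (∏ r, (σ r).1 (a r)) * u a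

/-- A pure meta-action: a mixed action for each role. -/
abbrev PureMeta (A : Fin m → Type) [∀ i, Fintype (A i)] : Type := ∀ i, Mixed (A i)

/-- The role-homogeneous pure meta-action instructing pure action `a i` in each role `i`. -/
noncomputable def diracProfile (a : ∀ i : Fin m, A i) : PureMeta A := fun i => Mixed.dirac (a i)

/-- Utility of LLM `j` under a profile of pure meta-actions. -/
noncomputable def Upure (u : ∀ i : Fin m, (∀ r : Fin m, A r) → ℝ) (p : Fin m → Fin k → ℝ)
    (j : Fin k) (M : Fin k → PureMeta A) : ℝ :=
  ∑ i, ∑ g : Fin m → Fin k,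
    if g i = j then (∏ r, p r (g r)) * expPay (u i) (fun r => M (g r) r) else 0

/-- Utility of LLM `j` under a profile of (finitely supported, independent) meta-actions. -/
noncomputable def U (u : ∀ i : Fin m, (∀ r : Fin m, A r) → ℝ) (p : Fin m → Fin k → ℝ)
    (Γ : Fin k → FinDist (PureMeta A)) (j : Fin k) : ℝ :=
  ∑ M ∈ Fintype.piFinset (fun j' => (Γ j').support),
    (∏ j', (Γ j').w (M j')) * Upure u p j M

/-- Nash equilibrium of the one-shot meta-game. -/
def Nash (u : ∀ i : Fin m, (∀ r : Fin m, A r) → ℝ) (p : Fin m → Fin k → ℝ)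
    (Γ : Fin k → FinDist (PureMeta A)) : Prop :=
  ∀ (j : Fin k) (Γ' : FinDist (PureMeta A)),
    U u p (Function.update Γ j Γ') j ≤ U u p Γ j

/-- Average utility of the clients governed by LLM `j`. -/
noncomputable def avgU (u : ∀ i : Fin m, (∀ r : Fin m, A r) → ℝ) (p : Fin m → Fin k → ℝ)
    (Γ : Fin k → FinDist (PureMeta A)) (j : Fin k) : ℝ :=
  U u p Γ j / ∑ i, p i j

/-- A meta-action is role-homogeneous if every pure meta-action in its support is a
tuple of point-mass mixed actions. -/
def RoleHomogeneous (Γ : FinDist (PureMeta A)) : Prop :=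
  ∀ M ∈ Γ.support, ∃ a : ∀ i : Fin m, A i, M = diracProfile a


/-- Majority-coordination payoffs with three roles and actions `{0,1}` (encoded as `Bool`): if
all three roles choose the same action each receives `100/3`; if exactly two coincide those two
receive `50` each and the third receives `0`. -/
noncomputable def mcu (i : Fin 3) (a : ∀ _ : Fin 3, Bool) : ℝ :=
  if a 0 = a 1 ∧ a 1 = a 2 then 100 / 3
  else if (Finset.univ.filter (fun r => a r = a i)).card = 2 then 50 else 0

/-- Client shares in the two-LLM majority-coordination meta-game: LLM `0` governs a share `pp`
of each role, LLM `1` the remaining `1 - pp`. -/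
def mcp (pp : ℝ) : Fin 3 → Fin 2 → ℝ := fun _ j => if j = 0 then pp else 1 - pp

end MetaGame

/-! Against a pure meta-action of LLM 2, an LLM-1 client instructed to play `b` earns
`matchPayoff x y`, where `x, y ∈ [p, 1]` are the probabilities that its two opponents play `b`.
Switching the instruction to `!b` reflects `x, y` to `1 + p - x, 1 + p - y`, and the average of
the two payoffs is bilinear in `(x, y)` and minimised at `x = y = p` (or `x = y = 1`), where it
equals the claimed bound. Payoffs being nonnegative, the other support points of `Γ¹` only help,
and mixing over LLM 2's pure meta-actions preserves the bound. -/

theorem Fintype.sum_fin_succ_pi {n : ℕ} {α β : Type*} [Fintype α] [AddCommMonoid β]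
    (f : (Fin (n + 1) → α) → β) :
    ∑ g, f g = ∑ a, ∑ v : Fin n → α, f (Fin.cons a v) := by
  rw [← Fintype.sum_prod_type']
  exact (Fintype.sum_equiv (Fin.consEquiv fun _ => α) _ _ fun _ => rfl).symm

theorem Fintype.sum_fin_three_pi {α β : Type*} [Fintype α] [AddCommMonoid β]
    (f : (Fin 3 → α) → β) :
    ∑ g, f g = ∑ x, ∑ y, ∑ z, f ![x, y, z] := by
  simp only [Fintype.sum_fin_succ_pi, Fintype.sum_unique]
  rfl

theorem Finset.sum_piFinset_fin_two {α β : Type*} [AddCommMonoid β] (S : Fin 2 → Finset α)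
    (f : (Fin 2 → α) → β) :
    ∑ M ∈ Fintype.piFinset S, f M = ∑ a ∈ S 0, ∑ b ∈ S 1, f ![a, b] := by
  rw [← Finset.sum_product']
  refine Finset.sum_nbij' (fun M => (M 0, M 1)) (fun ab => ![ab.1, ab.2]) ?_ ?_ ?_ ?_ ?_
  · intro M hM
    simp_all [Fintype.mem_piFinset]
  · intro ab hab
    simp_all [Fintype.mem_piFinset, Fin.forall_fin_two]
  · intro M _
    ext i; fin_cases i <;> rfl
  · intro ab _
    rfl
  · intro M _
    congr
    ext i; fin_cases i <;> rfl

namespace MetaGame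

theorem Mixed.apply_not (σ : Mixed Bool) (b : Bool) : σ.1 (!b) = 1 - σ.1 b := by
  have h := σ.2.2
  rw [Fintype.sum_bool] at h
  cases b <;> simp only [Bool.not_false, Bool.not_true] <;> linarith

theorem Mixed.dirac_injective {α : Type} [Fintype α] [DecidableEq α] :
    Function.Injective (Mixed.dirac (α := α)) := by
  intro a b h
  simpa [Mixed.dirac] using congrArg (fun σ : Mixed α => σ.1 a) h

theorem FinDist.sum_mul_le_sum_support_mul {α : Type} (Γ : FinDist α) (S : Finset α)
    {f : α → ℝ} (hf : ∀ x, 0 ≤ f x) :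
    ∑ x ∈ S, Γ.w x * f x ≤ ∑ x ∈ Γ.support, Γ.w x * f x := by
  classical
  calc ∑ x ∈ S, Γ.w x * f x = ∑ x ∈ S ∩ Γ.support, Γ.w x * f x := by
        refine (Finset.sum_subset Finset.inter_subset_left fun x hxS hx => ?_).symm
        rw [Γ.zero_of_not_mem x fun h => hx (Finset.mem_inter.2 ⟨hxS, h⟩), zero_mul]
    _ ≤ ∑ x ∈ Γ.support, Γ.w x * f x :=
        Finset.sum_le_sum_of_subset_of_nonneg Finset.inter_subset_right
          fun x _ _ => mul_nonneg (Γ.nonneg x) (hf x)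

section General

variable {m : ℕ} {A : Fin m → Type} [∀ i, Fintype (A i)]

theorem diracProfile_injective [∀ i, DecidableEq (A i)] :
    Function.Injective (diracProfile (A := A)) :=
  fun _ _ h => funext fun i => Mixed.dirac_injective (congrFun h i)

theorem expPay_nonneg {u : (∀ r : Fin m, A r) → ℝ} (hu : ∀ a, 0 ≤ u a) (σ : ∀ r, Mixed (A r)) :
    0 ≤ expPay u σ :=
  Finset.sum_nonneg fun a _ =>
    mul_nonneg (Finset.prod_nonneg fun r _ => (σ r).2.1 (a r)) (hu a)

theorem Upure_nonneg {k : ℕ} {u : ∀ i : Fin m, (∀ r : Fin m, A r) → ℝ} {p : Fin m → Fin k → ℝ}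
    (hu : ∀ i a, 0 ≤ u i a) (hp : ∀ r j, 0 ≤ p r j) (j : Fin k) (M : Fin k → PureMeta A) :
    0 ≤ Upure u p j M := by
  refine Finset.sum_nonneg fun i _ => Finset.sum_nonneg fun g _ => ?_
  split_ifs
  · exact mul_nonneg (Finset.prod_nonneg fun r _ => hp r (g r)) (expPay_nonneg (hu i) _)
  · exact le_rfl

theorem U_fin_two (u : ∀ i : Fin m, (∀ r : Fin m, A r) → ℝ) (p : Fin m → Fin 2 → ℝ)
    (Γ₁ Γ₂ : FinDist (PureMeta A)) (j : Fin 2) :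
    U u p ![Γ₁, Γ₂] j = ∑ M₂ ∈ Γ₂.support, Γ₂.w M₂ *
      ∑ M₁ ∈ Γ₁.support, Γ₁.w M₁ * Upure u p j ![M₁, M₂] := by
  rw [U, Finset.sum_piFinset_fin_two, Finset.sum_comm]
  simp only [Finset.mul_sum, Fin.prod_univ_two, Matrix.cons_val_zero, Matrix.cons_val_one]
  exact Finset.sum_congr rfl fun _ _ => Finset.sum_congr rfl fun _ _ => by ring

theorem le_U_of_forall_pure {u : ∀ i : Fin m, (∀ r : Fin m, A r) → ℝ} {p : Fin m → Fin 2 → ℝ}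
    {Γ₁ : FinDist (PureMeta A)} {j : Fin 2} {c : ℝ}
    (h : ∀ M₂, c ≤ ∑ M₁ ∈ Γ₁.support, Γ₁.w M₁ * Upure u p j ![M₁, M₂])
    (Γ₂ : FinDist (PureMeta A)) :
    c ≤ U u p ![Γ₁, Γ₂] j := by
  rw [U_fin_two]
  calc c = ∑ M₂ ∈ Γ₂.support, Γ₂.w M₂ * c := by rw [← Finset.sum_mul, Γ₂.sum_one, one_mul]
    _ ≤ _ := Finset.sum_le_sum fun M₂ _ => mul_le_mul_of_nonneg_left (h M₂) (Γ₂.nonneg M₂)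

end General

theorem mcu_nonneg (i : Fin 3) (a : ∀ _ : Fin 3, Bool) : 0 ≤ mcu i a := by
  unfold mcu
  split_ifs <;> norm_num

theorem mcp_nonneg {p : ℝ} (hp₀ : 0 ≤ p) (hp₁ : p ≤ 1) (r : Fin 3) (j : Fin 2) :
    0 ≤ mcp p r j := by
  unfold mcp
  split_ifs <;> linarith

/-- Expected majority-coordination payoff of a player whose two opponents play its action
independently with probabilities `x` and `y`. -/
noncomputable def matchPayoff (x y : ℝ) : ℝ :=
  100 / 3 * (x * y) + 50 * (x * (1 - y) + (1 - x) * y)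

/-- The probability that a client in a role where LLM 1 (share `p`) instructs `b` and LLM 2
plays `σ` chooses `b`. -/
def matchProb (p : ℝ) (b : Bool) (σ : Mixed Bool) : ℝ := p + (1 - p) * σ.1 b

theorem matchProb_mem_Icc {p : ℝ} (hp : p ≤ 1) (b : Bool) (σ : Mixed Bool) :
    matchProb p b σ ∈ Set.Icc p 1 := by
  have h₀ := σ.2.1 b
  have h₁ := Mixed.apply_not σ b ▸ σ.2.1 (!b)
  constructor <;> unfold matchProb <;> nlinarith

theorem matchProb_not (p : ℝ) (b : Bool) (σ : Mixed Bool) :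
    matchProb p (!b) σ = 1 + p - matchProb p b σ := by
  simp only [matchProb, Mixed.apply_not]
  ring

theorem Upure_mcu_diracProfile (p : ℝ) (b : Bool) (M : PureMeta (fun _ : Fin 3 => Bool)) :
    Upure mcu (mcp p) 0 ![diracProfile (fun _ => b), M] =
      p * (matchPayoff (matchProb p b (M 1)) (matchProb p b (M 2)) +
        matchPayoff (matchProb p b (M 0)) (matchProb p b (M 2)) +
        matchPayoff (matchProb p b (M 0)) (matchProb p b (M 1))) := by
  have hs := fun r => Mixed.apply_not (M r) b
  cases b <;>
  · simp only [Bool.not_false, Bool.not_true] at hs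
    simp +decide only [Upure, expPay, mcp, mcu, diracProfile, Mixed.dirac, matchPayoff, matchProb,
      hs, Fintype.sum_fin_three_pi, Fin.sum_univ_two, Fin.sum_univ_three, Fin.prod_univ_three,
      Fintype.univ_bool, sum_insert, sum_singleton, mem_singleton, Matrix.cons_val',
      Matrix.cons_val_fin_one, Matrix.cons_val_zero, Matrix.cons_val_one, Matrix.cons_val,
      Fin.isValue, mul_ite, ite_mul, ite_self, ↓reduceIte, not_false_eq_true, and_true, and_false,
      mul_zero, zero_mul, mul_one, one_mul, zero_add, add_zero]
    ring

theorem matchPayoff_add_reflect_ge {p x y : ℝ} (hx : x ∈ Set.Icc p 1) (hy : y ∈ Set.Icc p 1) :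
    2 * (100 / 3 + 50 / 3 * (1 - p) * (2 * p - 1)) ≤
      matchPayoff x y + matchPayoff (1 + p - x) (1 + p - y) := by
  obtain ⟨hpx, hx1⟩ := hx
  obtain ⟨hpy, hy1⟩ := hy
  -- the difference is `(200 / 3) * ((x - p) * (1 - y) + (y - p) * (1 - x))`
  unfold matchPayoff
  nlinarith [mul_nonneg (sub_nonneg.2 hpx) (sub_nonneg.2 hy1),
    mul_nonneg (sub_nonneg.2 hpy) (sub_nonneg.2 hx1)]

theorem Upure_mcu_coordinated_mixture_ge {p : ℝ} (hp₀ : 0 ≤ p) (hp₁ : p ≤ 1)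
    (M : PureMeta (fun _ : Fin 3 => Bool)) :
    3 * p * (100 / 3 + 50 / 3 * (1 - p) * (2 * p - 1)) ≤
      1 / 2 * Upure mcu (mcp p) 0 ![diracProfile (fun _ => false), M] +
        1 / 2 * Upure mcu (mcp p) 0 ![diracProfile (fun _ => true), M] := by
  have hx := fun r => matchProb_mem_Icc hp₁ false (M r)
  have hrefl := fun r => matchProb_not p false (M r)
  simp only [Bool.not_false] at hrefl
  rw [Upure_mcu_diracProfile, Upure_mcu_diracProfile, hrefl, hrefl, hrefl]
  have h₀₁ := matchPayoff_add_reflect_ge (hx 0) (hx 1)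
  have h₀₂ := matchPayoff_add_reflect_ge (hx 0) (hx 2)
  have h₁₂ := matchPayoff_add_reflect_ge (hx 1) (hx 2)
  nlinarith [mul_le_mul_of_nonneg_left (add_le_add (add_le_add h₁₂ h₀₂) h₀₁) hp₀]

/-- In the majority-coordination meta-game with `p > 1/2`, the meta-action of LLM `1` that mixes
uniformly between the two coordinated instructions `(0,0,0)` and `(1,1,1)` guarantees it an
average utility of at least `100/3 + (50/3)(1−p)(2p−1) > 100/3`, whatever LLM `2` plays. -/
theorem mc_large_llm_guarantee
    (pp : ℝ) (hpp : 1 / 2 < pp) (hpp1 : pp < 1)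
    (Γ1 : FinDist (PureMeta (fun _ : Fin 3 => Bool)))
    (h0 : Γ1.w (diracProfile (fun _ => false)) = 1 / 2)
    (h1 : Γ1.w (diracProfile (fun _ => true)) = 1 / 2) :
    ∀ Γ2 : FinDist (PureMeta (fun _ : Fin 3 => Bool)),
      100 / 3 + (50 / 3) * (1 - pp) * (2 * pp - 1) ≤ avgU mcu (mcp pp) ![Γ1, Γ2] 0 ∧
      100 / 3 < avgU mcu (mcp pp) ![Γ1, Γ2] 0 := by
  classical
  intro Γ2
  have hp₀ : 0 ≤ pp := by linarith
  have hU : 3 * pp * (100 / 3 + 50 / 3 * (1 - pp) * (2 * pp - 1)) ≤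
      U mcu (mcp pp) ![Γ1, Γ2] 0 := by
    refine le_U_of_forall_pure (fun M₂ => ?_) Γ2
    have hne : diracProfile (fun _ : Fin 3 => false) ≠ diracProfile fun _ => true :=
      diracProfile_injective.ne fun h => by simpa using congrFun h 0
    calc _ ≤ _ := Upure_mcu_coordinated_mixture_ge hp₀ hpp1.le M₂
      _ = ∑ M₁ ∈ {diracProfile fun _ => false, diracProfile fun _ => true},
            Γ1.w M₁ * Upure mcu (mcp pp) 0 ![M₁, M₂] := by
          rw [Finset.sum_pair hne, h0, h1]
      _ ≤ _ := Γ1.sum_mul_le_sum_support_mul _ fun _ =>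
          Upure_nonneg mcu_nonneg (mcp_nonneg hp₀ hpp1.le) 0 _
  have hshare : ∑ i, mcp pp i 0 = 3 * pp := by
    simp only [mcp, Fin.sum_univ_three, if_true]
    ring
  have hbound :
      100 / 3 + (50 / 3) * (1 - pp) * (2 * pp - 1) ≤ avgU mcu (mcp pp) ![Γ1, Γ2] 0 := by
    rw [avgU, hshare, le_div_iff₀ (by linarith)]
    linarith
  exact ⟨hbound, lt_of_lt_of_le (by nlinarith) hbound⟩

end MetaGame
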